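/- arXiv:1704.02305 — 3 statements merged into one kernel-verified Lean document; each statement's English description precedes it below -/
import Mathlib

section
/- Iterated integrals satisfy the concatenation (coproduct) formula: for any a, b, c ∈ ℂ, C_a^c(f_1, f_2, ..., f_n) = Σ_{i=0}^{n} C_a^b(f_1, ..., f_i) · C_b^c(f_{i+1}, ..., f_n). -/
noncomputable section

/-- The integral of `f` along the straight-line path from `a` to `b` in `ℂ`. -/
noncomputable def lineIntegral (a b : ℂ) (f : ℂ → ℂ) : ℂ :=
  ∫ t in (0:ℝ)..1, (b - a) * f (a + (t : ℂ) * (b - a))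

/-- Auxiliary iterated integral: the head of the list is the *outermost* integrand. -/
noncomputable def iterCAux (a : ℂ) : List (ℂ → ℂ) → ℂ → ℂ
  | [], _ => 1
  | f :: fs, b =>
      ∫ t in (0:ℝ)..1,
        (b - a) * (f (a + (t : ℂ) * (b - a)) * iterCAux a fs (a + (t : ℂ) * (b - a)))

/-- `iterC a b [f₁, …, fₙ]` is the iterated integral
`C_a^b(f₁,…,fₙ) = ∫_a^b fₙ(zₙ) ∫_a^{zₙ} f_{n-1}(z_{n-1}) ⋯ ∫_a^{z₂} f₁(z₁) dz₁ ⋯ dzₙ`,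
with all integration along straight-line paths. -/
noncomputable def iterC (a b : ℂ) (l : List (ℂ → ℂ)) : ℂ := iterCAux a l.reverse b

/-! Induct on the last integrand `f`. As functions of `c`, both sides have derivative
`f c * C_a^c(f₁, …, fₙ₋₁)` (for the right side this is the induction hypothesis), and they agree
at `c = b`, where every term `C_b^b(…, f)` vanishes. The derivative of `c ↦ ∫_a^c F` is `F`
because an entire function has a primitive. -/

theorem lineIntegral_eq_sub_of_hasDerivAt {F P : ℂ → ℂ} (hP : ∀ z, HasDerivAt P (F z) z)
    (hF : Continuous F) (a b : ℂ) : lineIntegral a b F = P b - P a := by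
  have hpath : ∀ t : ℝ, HasDerivAt (fun s : ℝ => P (a + s * (b - a)))
      ((b - a) * F (a + t * (b - a))) t := by
    intro t
    have := ((hP (a + t * (b - a))).comp (t : ℂ)
      (((hasDerivAt_id (t : ℂ)).mul_const (b - a)).const_add a)).comp_ofReal
    simpa [mul_comm] using this
  rw [lineIntegral, intervalIntegral.integral_eq_sub_of_hasDerivAt (fun t _ => hpath t)
    (Continuous.intervalIntegrable (by fun_prop) 0 1)]
  simp

theorem hasDerivAt_lineIntegral {F : ℂ → ℂ} (hF : Differentiable ℂ F) (a z : ℂ) :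
    HasDerivAt (fun w => lineIntegral a w F) (F z) z := by
  obtain ⟨P, hP⟩ := hF.isExactOn_univ
  have hprim : (fun w => lineIntegral a w F) = fun w => P w - P a :=
    funext (lineIntegral_eq_sub_of_hasDerivAt (fun z => hP z trivial) hF.continuous a)
  rw [hprim]
  exact (hP z trivial).sub_const _

theorem lineIntegral_self (a : ℂ) (F : ℂ → ℂ) : lineIntegral a a F = 0 := by
  simp [lineIntegral]

@[simp]
theorem iterC_nil (a b : ℂ) : iterC a b [] = 1 := rfl

theorem iterC_append_singleton (a b : ℂ) (l : List (ℂ → ℂ)) (f : ℂ → ℂ) :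
    iterC a b (l ++ [f]) = lineIntegral a b (fun z => f z * iterC a z l) := by
  simp [iterC, iterCAux, lineIntegral]

@[simp]
theorem iterC_append_singleton_self (a : ℂ) (l : List (ℂ → ℂ)) (f : ℂ → ℂ) :
    iterC a a (l ++ [f]) = 0 := by
  rw [iterC_append_singleton, lineIntegral_self]

theorem differentiable_iterC {a : ℂ} {l : List (ℂ → ℂ)} (hl : ∀ f ∈ l, Differentiable ℂ f) :
    Differentiable ℂ (fun b => iterC a b l) := by
  induction l using List.reverseRecOn with
  | nil => exact differentiable_const 1
  | append_singleton l f ih =>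
    have hf : Differentiable ℂ f := hl f (by simp)
    have hl' : Differentiable ℂ (fun b => iterC a b l) := ih fun g hg => hl g (by simp [hg])
    simp_rw [iterC_append_singleton]
    exact fun z => (hasDerivAt_lineIntegral (hf.mul hl') a z).differentiableAt

theorem hasDerivAt_iterC_append_singleton {a : ℂ} {l : List (ℂ → ℂ)} {f : ℂ → ℂ}
    (hf : Differentiable ℂ f) (hl : ∀ g ∈ l, Differentiable ℂ g) (z : ℂ) :
    HasDerivAt (fun b => iterC a b (l ++ [f])) (f z * iterC a z l) z := by
  simp_rw [iterC_append_singleton]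
  exact hasDerivAt_lineIntegral (hf.mul (differentiable_iterC hl)) a z

theorem sum_range_take_drop_append_singleton {α M : Type*} [AddCommMonoid M]
    (Θ : List α → List α → M) (l : List α) (x : α) :
    ∑ i ∈ Finset.range ((l ++ [x]).length + 1), Θ ((l ++ [x]).take i) ((l ++ [x]).drop i) =
      ∑ i ∈ Finset.range (l.length + 1), Θ (l.take i) (l.drop i ++ [x]) + Θ (l ++ [x]) [] := by
  rw [List.length_append, List.length_singleton, Finset.sum_range_succ]
  congr 1
  · refine Finset.sum_congr rfl fun i hi => ?_
    have hi : i ≤ l.length := Nat.lt_succ_iff.mp (Finset.mem_range.mp hi)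
    rw [List.take_append_of_le_length hi, List.drop_append_of_le_length hi]
  · rw [List.take_of_length_le (by simp), List.drop_of_length_le (by simp)]

theorem stmt_2 (l : List (ℂ → ℂ)) (hl : ∀ f ∈ l, Differentiable ℂ f) (a b c : ℂ) :
    iterC a c l =
      ∑ i ∈ Finset.range (l.length + 1), iterC a b (l.take i) * iterC b c (l.drop i) := by
  induction l using List.reverseRecOn generalizing c with
  | nil => simp
  | append_singleton l f ih =>
    have hf : Differentiable ℂ f := hl f (by simp)
    have hl' : ∀ g ∈ l, Differentiable ℂ g := fun g hg => hl g (by simp [hg])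
    have hL := hasDerivAt_iterC_append_singleton (a := a) hf hl'
    have hR : ∀ z, HasDerivAt (fun c => ∑ i ∈ Finset.range (l.length + 1),
        iterC a b (l.take i) * iterC b c (l.drop i ++ [f]) + iterC a b (l ++ [f]))
        (f z * iterC a z l) z := by
      intro z
      rw [ih hl' z, Finset.mul_sum]
      refine (HasDerivAt.fun_sum fun i _ => ?_).add_const _
      rw [mul_left_comm]
      exact (hasDerivAt_iterC_append_singleton hf
        (fun g hg => hl' g (List.mem_of_mem_drop hg)) z).const_mul _
    have hLR := eq_of_fderiv_eq (𝕜 := ℂ) (fun z => (hL z).differentiableAt)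
      (fun z => (hR z).differentiableAt)
      (fun z => by rw [(hL z).hasFDerivAt.fderiv, (hR z).hasFDerivAt.fderiv]) b (by simp)
    rw [sum_range_take_drop_append_singleton (fun l₁ l₂ => iterC a b l₁ * iterC b c l₂),
      iterC_nil, mul_one]
    exact congrFun hLR c
end
end

section
/- If L ∈ Hom^[m](Γ,ℂ) and L' ∈ Hom^[n](Γ,ℂ) with m + n ≥ 1, then the pointwise product L·L' ∈ Hom^[m+n−1](Γ,ℂ). -/
/-- The space `Hom^[n](Γ,ℂ)` of `n`-th order maps from `Γ` to `ℂ`: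
`Hom^[0]` contains only the zero map, and `L ∈ Hom^[n+1]` iff for every `δ ∈ Γ`
the map `γ ↦ L(γδ) - L(γ)` lies in `Hom^[n]`. -/
def HomOrder (Γ : Type*) [Group Γ] : ℕ → Set (Γ → ℂ)
  | 0 => {L | L = fun _ => 0}
  | n + 1 => {L | ∀ δ : Γ, (fun γ => L (γ * δ) - L γ) ∈ HomOrder Γ n}

lemma homOrder_zero_mem (Γ : Type*) [Group Γ] :
    ∀ k, (fun _ : Γ => (0:ℂ)) ∈ HomOrder Γ k
  | 0 => rfl
  | k+1 => fun _ => by simpa using homOrder_zero_mem Γ k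

lemma homOrder_congr {Γ : Type*} [Group Γ] {k : ℕ} {L L' : Γ → ℂ}
    (h : L = L') (hL : L ∈ HomOrder Γ k) : L' ∈ HomOrder Γ k := h ▸ hL

lemma homOrder_add {Γ : Type*} [Group Γ] :
    ∀ k (L L' : Γ → ℂ), L ∈ HomOrder Γ k → L' ∈ HomOrder Γ k →
      (fun γ => L γ + L' γ) ∈ HomOrder Γ k
  | 0, L, L', hL, hL' => by
      simp only [HomOrder, Set.mem_setOf_eq] at *
      funext γ; rw [congrFun hL γ, congrFun hL' γ]; ring
  | k+1, L, L', hL, hL' => fun δ => by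
      have := homOrder_add k _ _ (hL δ) (hL' δ)
      apply homOrder_congr _ this
      funext γ; ring

lemma homOrder_mono {Γ : Type*} [Group Γ] :
    ∀ k (L : Γ → ℂ), L ∈ HomOrder Γ k → L ∈ HomOrder Γ (k+1)
  | 0, L, hL => fun δ => by
      simp only [HomOrder, Set.mem_setOf_eq] at hL ⊢
      funext γ; rw [congrFun hL (γ * δ), congrFun hL γ]; ring
  | k+1, L, hL => fun δ => homOrder_mono k _ (hL δ)

lemma homOrder_main {Γ : Type*} [Group Γ] :
    ∀ k m n, m + n = k → 1 ≤ m + n → ∀ L L' : Γ → ℂ,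
      L ∈ HomOrder Γ m → L' ∈ HomOrder Γ n →
      (fun γ => L γ * L' γ) ∈ HomOrder Γ (m + n - 1) := by
  intro k
  induction k using Nat.strong_induction_on with
  | _ k ih =>
    intro m n hk hmn L L' hL hL'
    match m, n with
    | 0, n =>
      simp only [HomOrder, Set.mem_setOf_eq] at hL
      apply homOrder_congr (L' := fun γ => L γ * L' γ) _ (homOrder_zero_mem Γ _)
      funext γ; rw [congrFun hL γ]; ring
    | m+1, 0 =>
      simp only [HomOrder, Set.mem_setOf_eq] at hL'
      apply homOrder_congr (L' := fun γ => L γ * L' γ) _ (homOrder_zero_mem Γ _)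
      funext γ; rw [congrFun hL' γ]; ring
    | a+1, b+1 =>
      -- goal : product ∈ HomOrder Γ (a+b+1)
      have hgoal : a + 1 + (b + 1) - 1 = (a + b) + 1 := by omega
      rw [hgoal]
      intro δ
      -- D = Δ_δ L ∈ Hom a, E = Δ_δ L' ∈ Hom b
      have hD : (fun γ => L (γ * δ) - L γ) ∈ HomOrder Γ a := hL δ
      have hE : (fun γ => L' (γ * δ) - L' γ) ∈ HomOrder Γ b := hL' δ
      -- three pieces
      have h1 : (fun γ => (L (γ * δ) - L γ) * L' γ) ∈ HomOrder Γ (a + b) := by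
        have := ih (a + (b+1)) (by omega) a (b+1) rfl (by omega) _ _ hD hL'
        simpa using this
      have h2 : (fun γ => L γ * (L' (γ * δ) - L' γ)) ∈ HomOrder Γ (a + b) := by
        have := ih ((a+1) + b) (by omega) (a+1) b rfl (by omega) _ _ hL hE
        have h' : (a+1) + b - 1 = a + b := by omega
        rw [h'] at this
        exact this
      have h3 : (fun γ => (L (γ * δ) - L γ) * (L' (γ * δ) - L' γ)) ∈ HomOrder Γ (a + b) := by
        rcases Nat.eq_zero_or_pos (a + b) with h0 | hpos
        · have ha : a = 0 := by omega
          have hb : b = 0 := by omega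
          subst ha hb
          simp only [HomOrder, Set.mem_setOf_eq] at hD hE ⊢
          funext γ; rw [congrFun hD γ]; ring
        · have := ih (a + b) (by omega) a b rfl (by omega) _ _ hD hE
          have := homOrder_mono (a + b - 1) _ this
          have h' : a + b - 1 + 1 = a + b := by omega
          rw [h'] at this
          exact this
      have hsum := homOrder_add (a+b) _ _ (homOrder_add (a+b) _ _ h3 h1) h2
      apply homOrder_congr _ hsum
      funext γ; ring

theorem stmt_10 (Γ : Type*) [Group Γ] (m n : ℕ) (hmn : 1 ≤ m + n)
    (L L' : Γ → ℂ) (hL : L ∈ HomOrder Γ m) (hL' : L' ∈ HomOrder Γ n) :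
    (fun γ => L γ * L' γ) ∈ HomOrder Γ (m + n - 1) := by
  exact homOrder_main (m + n) m n rfl hmn L L' hL hL'
end

section
/- If γ ∈ Γ is an element of finite order, i.e. γ^N = I for some N > 0, then L(γ) = L(I) for every L ∈ Hom^[n](Γ,ℂ) with n ≥ 0. -/
theorem stmt_14 (Γ : Type*) [Group Γ] (γ : Γ) (N : ℕ) (hN : 0 < N)
    (hγ : γ ^ N = 1) (n : ℕ) (L : Γ → ℂ) (hL : L ∈ HomOrder Γ n) :
    L γ = L 1 := by
  have key : ∀ n : ℕ, ∀ L ∈ HomOrder Γ n, ∀ α : Γ, L (α * γ) = L α := by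
    intro n
    induction n with
    | zero =>
      intro L hL α
      simp only [HomOrder, Set.mem_setOf_eq] at hL
      simp [hL]
    | succ n ih =>
      intro L hL α
      have hD : (fun β => L (β * γ) - L β) ∈ HomOrder Γ n := hL γ
      set D : Γ → ℂ := fun β => L (β * γ) - L β with hDdef
      have hDk : ∀ k : ℕ, ∀ β, D (β * γ ^ k) = D β := by
        intro k
        induction k with
        | zero => simp
        | succ k ihk =>
          intro β
          rw [pow_succ, ← mul_assoc, ih D hD (β * γ ^ k), ihk β]
      have hterm : ∀ k, D (α * γ ^ k) = L (α * γ ^ (k + 1)) - L (α * γ ^ k) := by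
        intro k; simp [hDdef, pow_succ, mul_assoc]
      have hsum : ∑ k ∈ Finset.range N, D (α * γ ^ k) = L (α * γ ^ N) - L α := by
        simp_rw [hterm]
        rw [Finset.sum_range_sub fun k => L (α * γ ^ k)]
        simp
      have hconst : ∑ k ∈ Finset.range N, D (α * γ ^ k) = N * D α := by
        simp [hDk]
      rw [hconst, hγ, mul_one, sub_self] at hsum
      have hNne : (N : ℂ) ≠ 0 := Nat.cast_ne_zero.mpr hN.ne'
      have hD0 : D α = 0 := by
        rcases mul_eq_zero.mp hsum with h | h
        · exact absurd h hNne
        · exact h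
      exact sub_eq_zero.mp hD0
  simpa using key n L hL 1
end
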